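/- arXiv:2603.02160 — 8 statements merged into one kernel-verified Lean document; each statement's English description precedes it below -/
import Mathlib

section
/- Let R be a finite collection of subsets of {1,...,m} closed under unions and intersections, and let φ: R → ℝ≥0 be increasing with respect to inclusion and satisfy the inclusion-exclusion inequality (for all A_1,...,A_k∈R, φ(∪A_i) ≥ ∑_{∅≠K⊆{1,...,k}} (-1)^{|K|+1} φ(∩_{i∈K}A_i)). Then there exist nonnegative weights (w_{A'})_{A'∈R} such that φ(A) = ∑_{A'∈R, A'⊆A} w_{A'} for every A∈R. -/
/-!
The weights are the Möbius inversion of `φ` on `(R, ⊆)`, so `φ A` is the total weight below `A`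
by construction. The weight of `A` is `φ A` minus the total weight strictly below `A`; by
inclusion-exclusion over the members of `R` strictly below `A`, that total is the alternating sum
of `φ` over their intersections, which the hypothesis bounds by `φ` of their union, hence by `φ A`.
-/

open Finset

lemma inclusion_exclusion_sum_biUnion_filter_subset {α ι G : Type*} [Fintype α] [DecidableEq α]
    [DecidableEq ι] [CommRing G] (R : Finset (Finset α)) (w : Finset α → G) (s : Finset ι)
    (B : ι → Finset α) :
    ∑ A ∈ s.biUnion (fun i => R.filter (· ⊆ B i)), w A
      = ∑ K ∈ s.powerset.filter (·.Nonempty),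
          (-1 : G) ^ (#K + 1) * ∑ A ∈ R.filter (· ⊆ K.inf B), w A := by
  have hfilter_inf (K : Finset ι) (hK : K.Nonempty) :
      R.filter (· ⊆ K.inf B) = K.inf' hK (fun i => R.filter (· ⊆ B i)) := by
    ext A
    simp only [mem_filter, mem_inf', Finset.le_inf_iff]
    exact ⟨fun h i hi => ⟨h.1, h.2 i hi⟩,
      fun h => ⟨(h _ hK.choose_spec).1, fun i hi => (h i hi).2⟩⟩
  rw [inclusion_exclusion_sum_biUnion, ← sum_coe_sort (s.powerset.filter (·.Nonempty))]
  refine sum_congr rfl fun K _ => ?_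
  rw [← hfilter_inf, zsmul_eq_mul, Int.cast_pow, Int.cast_neg, Int.cast_one]

section MobiusWeight

variable {α G : Type*} [DecidableEq α]

noncomputable def mobiusWeight [AddCommGroup G] (R : Finset (Finset α)) (φ : Finset α → G)
    (A : Finset α) : G :=
  φ A - ∑ A' ∈ (R.filter (· ⊂ A)).attach, mobiusWeight R φ A'.1
termination_by #A
decreasing_by exact card_lt_card (mem_filter.mp A'.2).2

section AddCommGroup

variable [AddCommGroup G] (R : Finset (Finset α)) (φ : Finset α → G)

lemma mobiusWeight_eq (A : Finset α) :
    mobiusWeight R φ A = φ A - ∑ A' ∈ R.filter (· ⊂ A), mobiusWeight R φ A' := by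
  rw [mobiusWeight, sum_attach]

lemma sum_mobiusWeight_filter_subset {A : Finset α} (hA : A ∈ R) :
    ∑ A' ∈ R.filter (· ⊆ A), mobiusWeight R φ A' = φ A := by
  have hsplit : R.filter (· ⊆ A) = insert A (R.filter (· ⊂ A)) := by
    ext A'
    simp only [mem_filter, mem_insert, subset_iff_ssubset_or_eq (a := A')]
    aesop
  rw [hsplit, sum_insert (by simp), mobiusWeight_eq]
  abel

end AddCommGroup

variable [Fintype α] [CommRing G] [PartialOrder G]

def SatisfiesInclusionExclusion (R : Finset (Finset α)) (φ : Finset α → G) : Prop :=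
  ∀ k : ℕ, 0 < k → ∀ A : Fin k → Finset α, (∀ i, A i ∈ R) →
    ∑ K ∈ (univ : Finset (Fin k)).powerset.filter (·.Nonempty), (-1 : G) ^ (#K + 1) * φ (K.inf A)
      ≤ φ (univ.sup A)

lemma mobiusWeight_nonneg [IsOrderedAddMonoid G] {R : Finset (Finset α)} {φ : Finset α → G}
    (hunion : SupClosed (R : Set (Finset α))) (hinter : InfClosed (R : Set (Finset α)))
    (hφ0 : ∀ A ∈ R, 0 ≤ φ A) (hmono : ∀ A ∈ R, ∀ B ∈ R, A ⊆ B → φ A ≤ φ B)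
    (hie : SatisfiesInclusionExclusion R φ) {A : Finset α} (hA : A ∈ R) :
    0 ≤ mobiusWeight R φ A := by
  rw [mobiusWeight_eq, sub_nonneg]
  set S := R.filter (· ⊂ A)
  obtain hS | hS := S.eq_empty_or_nonempty
  · simpa [hS] using hφ0 A hA
  set B : Fin #S → Finset α := fun i => S.equivFin.symm i
  have hBS (i : Fin #S) : B i ∈ S := (S.equivFin.symm i).2
  have hBR (i : Fin #S) : B i ∈ R := (mem_filter.mp (hBS i)).1
  have hbiUnion : univ.biUnion (fun i => R.filter (· ⊆ B i)) = S := by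
    ext A'
    simp only [S, mem_biUnion, mem_filter, mem_univ, true_and]
    constructor
    · rintro ⟨i, hA', hi⟩
      exact ⟨hA', hi.trans_ssubset (mem_filter.mp (hBS i)).2⟩
    · rintro ⟨hA', h⟩
      exact ⟨S.equivFin ⟨A', mem_filter.mpr ⟨hA', h⟩⟩, hA', by simp [B]⟩
  have hk : 0 < #S := card_pos.mpr hS
  have : Nonempty (Fin #S) := Fin.pos_iff_nonempty.mp hk
  have hsup : univ.sup B ∈ R := hunion.finsetSup_mem univ_nonempty fun i _ => hBR i
  calc ∑ A' ∈ S, mobiusWeight R φ A'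
      = ∑ A' ∈ univ.biUnion (fun i => R.filter (· ⊆ B i)), mobiusWeight R φ A' := by
        rw [hbiUnion]
    _ = ∑ K ∈ univ.powerset.filter (·.Nonempty),
          (-1) ^ (#K + 1) * ∑ A' ∈ R.filter (· ⊆ K.inf B), mobiusWeight R φ A' :=
        inclusion_exclusion_sum_biUnion_filter_subset R _ univ B
    _ = ∑ K ∈ univ.powerset.filter (·.Nonempty), (-1) ^ (#K + 1) * φ (K.inf B) :=
        sum_congr rfl fun K hK => by
          rw [sum_mobiusWeight_filter_subset R φ
            (hinter.finsetInf_mem (mem_filter.mp hK).2 fun i _ => hBR i)]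
    _ ≤ φ (univ.sup B) := hie _ hk B hBR
    _ ≤ φ A := hmono _ hsup _ hA (Finset.sup_le fun i _ => (mem_filter.mp (hBS i)).2.subset)

end MobiusWeight

theorem weights_of_inclusion_exclusion_general {m : ℕ} (R : Finset (Finset (Fin m)))
    (hunion : ∀ A ∈ R, ∀ B ∈ R, A ∪ B ∈ R)
    (hinter : ∀ A ∈ R, ∀ B ∈ R, A ∩ B ∈ R)
    (φ : Finset (Fin m) → ℝ) (hφ0 : ∀ A ∈ R, 0 ≤ φ A)
    (hmono : ∀ A ∈ R, ∀ B ∈ R, A ⊆ B → φ A ≤ φ B)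
    (hie : ∀ k : ℕ, 0 < k → ∀ A : Fin k → Finset (Fin m), (∀ i, A i ∈ R) →
      ∑ K ∈ (Finset.univ : Finset (Fin k)).powerset.filter (fun K => K.Nonempty),
          (-1 : ℝ) ^ (K.card + 1) * φ (K.inf A)
        ≤ φ (Finset.univ.sup A)) :
    ∃ w : Finset (Fin m) → ℝ, (∀ A ∈ R, 0 ≤ w A) ∧
      ∀ A ∈ R, φ A = ∑ A' ∈ R.filter (fun A' => A' ⊆ A), w A' :=
  ⟨mobiusWeight R φ,
    fun _ => mobiusWeight_nonneg (fun A hA B hB => hunion A hA B hB)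
      (fun A hA B hB => hinter A hA B hB) hφ0 hmono hie,
    fun _ hA => (sum_mobiusWeight_filter_subset R φ hA).symm⟩

theorem weights_of_inclusion_exclusion {m : ℕ} (R : Finset (Finset (Fin m)))
    (hunion : ∀ A ∈ R, ∀ B ∈ R, A ∪ B ∈ R)
    (hinter : ∀ A ∈ R, ∀ B ∈ R, A ∩ B ∈ R)
    (hempty : ∅ ∈ R)
    (φ : Finset (Fin m) → ℝ) (hφ0 : ∀ A ∈ R, 0 ≤ φ A)
    (hmono : ∀ A ∈ R, ∀ B ∈ R, A ⊆ B → φ A ≤ φ B)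
    (hie : ∀ k : ℕ, 0 < k → ∀ A : Fin k → Finset (Fin m), (∀ i, A i ∈ R) →
      ∑ K ∈ (Finset.univ : Finset (Fin k)).powerset.filter (fun K => K.Nonempty),
          (-1 : ℝ) ^ (K.card + 1) * φ (K.inf A)
        ≤ φ (Finset.univ.sup A)) :
    ∃ w : Finset (Fin m) → ℝ, (∀ A ∈ R, 0 ≤ w A) ∧
      ∀ A ∈ R, φ A = ∑ A' ∈ R.filter (fun A' => A' ⊆ A), w A' :=
  weights_of_inclusion_exclusion_general R hunion hinter φ hφ0 hmono hie
end

section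
/- Let (X,⪯) be a finite poset in which each element covers at most two elements. Let U be the lattice of upward-closed subsets of X. Let φ_i ≥ 0 be weights on elements and define σ(A) = ∑_{x∈Min(A)} φ_x for A∈U, where Min(A) is the set of minimal elements of A. Assume σ is increasing: A⊆B implies σ(A)≤σ(B). Then there exist nonnegative weights w_{ij} ≥ 0 for i,j∈X such that for every upset A, σ(A) = ∑_{i,j∈A} w_{ij}. -/
open Finset
open scoped Classical

private lemma exists_le_covBy' {X : Type*} [Fintype X] [PartialOrder X] {y x : X}
    (h : y < x) : ∃ z, y ≤ z ∧ z ⋖ x := by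
  classical
  obtain ⟨m, hm, hmax⟩ := Finset.exists_maximal
    (s := univ.filter (fun z => y ≤ z ∧ z < x)) ⟨y, by simp [h]⟩
  simp only [mem_filter, mem_univ, true_and] at hm hmax
  exact ⟨m, hm.1, hm.2, fun c hmc hcx => absurd (hmax ⟨le_trans hm.1 hmc.le, hcx⟩ hmc.le) (not_le_of_gt hmc)⟩

theorem sizing_pairwise_weights {X : Type*} [Fintype X] [PartialOrder X]
    (hcov : ∀ x : X, ({y : X | y ⋖ x}).ncard ≤ 2)
    (φ : X → ℝ) (hφ0 : ∀ x, 0 ≤ φ x)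
    (σ : Finset X → ℝ)
    (hσ : ∀ A : Finset X,
      σ A = ∑ x ∈ A.filter (fun x => ∀ y ∈ A, y ≤ x → y = x), φ x)
    (hmono : ∀ A B : Finset X, IsUpperSet (A : Set X) → IsUpperSet (B : Set X) →
      A ⊆ B → σ A ≤ σ B) :
    ∃ w : X → X → ℝ, (∀ i j, 0 ≤ w i j) ∧
      ∀ A : Finset X, IsUpperSet (A : Set X) →
        σ A = ∑ i ∈ A, ∑ j ∈ A, w i j := by
  classical
  have hcard : ∀ x : X, (univ.filter (fun y => y ⋖ x)).card ≤ 2 := by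
    intro x
    have hset : {y : X | y ⋖ x} = ↑(univ.filter (fun y => y ⋖ x)) := by ext y; simp
    have h := hcov x
    rwa [hset, Set.ncard_coe_finset] at h
  -- diagonal nonnegativity from monotonicity
  have hdiag : ∀ i : X, (∑ z ∈ univ.filter (fun z => i ⋖ z), φ z) ≤ φ i := by
    intro i
    have hA : IsUpperSet ((univ.filter (fun z => i < z) : Finset X) : Set X) := by
      intro a b hab ha
      simp only [coe_filter, Set.mem_setOf_eq, mem_univ, true_and] at ha ⊢
      exact lt_of_lt_of_le ha hab
    have hB : IsUpperSet ((univ.filter (fun z => i ≤ z) : Finset X) : Set X) := by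
      intro a b hab ha
      simp only [coe_filter, Set.mem_setOf_eq, mem_univ, true_and] at ha ⊢
      exact le_trans ha hab
    have hsub : univ.filter (fun z => i < z) ⊆ univ.filter (fun z => i ≤ z) := by
      intro a ha; simp only [mem_filter, mem_univ, true_and] at ha ⊢; exact ha.le
    have h1 : σ (univ.filter (fun z => i < z)) = ∑ z ∈ univ.filter (fun z => i ⋖ z), φ z := by
      rw [hσ]
      congr 1
      ext x
      simp only [mem_filter, mem_univ, true_and]
      constructor
      · rintro ⟨hx, hmin⟩
        exact ⟨hx, fun c hic hcx => absurd (hmin c hic hcx.le) (ne_of_lt hcx)⟩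
      · rintro hx
        refine ⟨hx.1, fun y hy hyx => ?_⟩
        by_contra hne
        exact hx.2 hy (lt_of_le_of_ne hyx hne)
    have h2 : σ (univ.filter (fun z => i ≤ z)) = φ i := by
      rw [hσ]
      have heq : (univ.filter (fun z => i ≤ z)).filter
          (fun x => ∀ y ∈ univ.filter (fun z => i ≤ z), y ≤ x → y = x) = {i} := by
        ext x
        simp only [mem_filter, mem_univ, true_and, mem_singleton]
        constructor
        · rintro ⟨hx, hmin⟩
          exact (hmin i le_rfl hx).symm
        · rintro rfl
          exact ⟨le_rfl, fun y hy hyx => le_antisymm hyx hy⟩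
      rw [heq, sum_singleton]
    have h3 := hmono _ _ hA hB hsub
    rw [h1, h2] at h3
    exact h3
  refine ⟨fun i j => if i = j then φ i - ∑ z ∈ univ.filter (fun z => i ⋖ z), φ z
      else (1/2) * ∑ x ∈ univ.filter (fun x => i ⋖ x ∧ j ⋖ x), φ x, ?_, ?_⟩
  · intro i j
    dsimp only
    by_cases h : i = j
    · subst h
      rw [if_pos rfl]
      have := hdiag i
      linarith
    · rw [if_neg h]
      apply mul_nonneg (by norm_num)
      exact sum_nonneg fun x _ => hφ0 x
  intro A hA
  rw [hσ]
  set k : X → ℕ := fun x => (A.filter (fun y => y ⋖ x)).card with hk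
  have hk2 : ∀ x, k x ≤ 2 := fun x =>
    le_trans (card_le_card (filter_subset_filter _ (subset_univ A))) (hcard x)
  have hmemk : ∀ x, 1 ≤ k x → x ∈ A := by
    intro x hx
    obtain ⟨y, hy⟩ := card_pos.mp (lt_of_lt_of_le Nat.zero_lt_one hx)
    simp only [mem_filter] at hy
    exact hA hy.2.le hy.1
  have hmink : ∀ x ∈ A, ((∀ y ∈ A, y ≤ x → y = x) ↔ k x = 0) := by
    intro x hxA
    constructor
    · intro hmin
      simp only [hk, card_eq_zero, filter_eq_empty_iff]
      intro y hy hcov'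
      exact absurd (hmin y hy hcov'.le) (ne_of_lt hcov'.lt)
    · intro h0 y hyA hyx
      by_contra hne
      obtain ⟨z, hyz, hzx⟩ := exists_le_covBy' (lt_of_le_of_ne hyx hne)
      have hzmem : z ∈ A.filter (fun y => y ⋖ x) := mem_filter.mpr ⟨hA hyz hyA, hzx⟩
      have h0' : A.filter (fun y => y ⋖ x) = ∅ := card_eq_zero.mp h0
      rw [h0'] at hzmem
      exact absurd hzmem (notMem_empty z)
  -- split w into a diagonal part plus an off-diagonal part spread over x ∈ univ
  have hsplit : ∀ i ∈ A, ∀ j ∈ A,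
      (if i = j then φ i - ∑ z ∈ univ.filter (fun z => i ⋖ z), φ z
       else (1/2) * ∑ x ∈ univ.filter (fun x => i ⋖ x ∧ j ⋖ x), φ x)
      = (if i = j then φ i - ∑ z ∈ univ.filter (fun z => i ⋖ z), φ z else 0)
        + ∑ x ∈ univ, (if i ⋖ x ∧ j ⋖ x ∧ i ≠ j then φ x / 2 else 0) := by
    intro i _ j _
    by_cases h : i = j
    · simp [h]
    · rw [if_neg h, if_neg h, zero_add, sum_filter, mul_sum]
      refine sum_congr rfl fun x _ => ?_
      by_cases hx : i ⋖ x ∧ j ⋖ x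
      · rw [if_pos hx, if_pos ⟨hx.1, hx.2, h⟩]; ring
      · rw [if_neg hx, if_neg (fun hc => hx ⟨hc.1, hc.2.1⟩), mul_zero]
  rw [sum_congr rfl fun i hi => sum_congr rfl fun j hj => hsplit i hi j hj]
  rw [sum_congr rfl fun i (_ : i ∈ A) => sum_add_distrib
    (s := A)
    (f := fun j => if i = j then φ i - ∑ z ∈ univ.filter (fun z => i ⋖ z), φ z else 0)
    (g := fun j => ∑ x ∈ univ, (if i ⋖ x ∧ j ⋖ x ∧ i ≠ j then φ x / 2 else 0))]
  rw [sum_add_distrib]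
  -- Diagonal part
  have hD : (∑ i ∈ A, ∑ j ∈ A,
      (if i = j then φ i - ∑ z ∈ univ.filter (fun z => i ⋖ z), φ z else 0))
      = (∑ x ∈ univ, (if x ∈ A then φ x else 0)) - ∑ x ∈ univ, (k x : ℝ) * φ x := by
    have step1 : ∀ i ∈ A, (∑ j ∈ A,
        (if i = j then φ i - ∑ z ∈ univ.filter (fun z => i ⋖ z), φ z else 0))
        = φ i - ∑ z ∈ univ.filter (fun z => i ⋖ z), φ z := by
      intro i hi
      rw [sum_ite_eq, if_pos hi]
    rw [sum_congr rfl step1, sum_sub_distrib]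
    congr 1
    · rw [sum_ite_mem, univ_inter]
    · -- ∑_{i∈A} ∑_{z : i⋖z} φ z = ∑_z k z * φ z
      have : ∀ i ∈ A, (∑ z ∈ univ.filter (fun z => i ⋖ z), φ z)
          = ∑ z ∈ univ, (if i ⋖ z then φ z else 0) := fun i _ => sum_filter _ _
      rw [sum_congr rfl this, sum_comm]
      refine sum_congr rfl fun z _ => ?_
      rw [← sum_filter, sum_const, nsmul_eq_mul]
  rw [hD]
  -- Off-diagonal part
  have hE : (∑ i ∈ A, ∑ j ∈ A, ∑ x ∈ univ, (if i ⋖ x ∧ j ⋖ x ∧ i ≠ j then φ x / 2 else 0))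
      = ∑ x ∈ univ, (k x : ℝ) * ((k x : ℝ) - 1) * (φ x / 2) := by
    rw [sum_congr rfl fun i (_ : i ∈ A) => sum_comm (s := A) (t := univ)
      (f := fun j x => if i ⋖ x ∧ j ⋖ x ∧ i ≠ j then φ x / 2 else 0)]
    rw [sum_comm]
    refine sum_congr rfl fun x _ => ?_
    -- fixed x: count ordered distinct pairs of lower covers of x in A
    have hinner : ∀ i ∈ A, (∑ j ∈ A, (if i ⋖ x ∧ j ⋖ x ∧ i ≠ j then φ x / 2 else 0))
        = if i ⋖ x then (k x : ℝ) * (φ x / 2) - φ x / 2 else 0 := by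
      intro i hiA
      by_cases hix : i ⋖ x
      · rw [if_pos hix]
        have e1 : ∀ j ∈ A, (if i ⋖ x ∧ j ⋖ x ∧ i ≠ j then φ x / 2 else 0)
            = (if j ⋖ x then φ x / 2 else 0) - (if j ⋖ x ∧ i = j then φ x / 2 else 0) := by
          intro j _
          by_cases hjx : j ⋖ x
          · by_cases hij : i = j
            · simp [hjx, hij]
            · simp [hix, hjx, hij]
          · simp [hjx, fun hc : i ⋖ x ∧ j ⋖ x ∧ i ≠ j => hjx hc.2.1]
        rw [sum_congr rfl e1, sum_sub_distrib]
        congr 1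
        · rw [← sum_filter, sum_const, nsmul_eq_mul]
        · have e2 : ∀ j ∈ A, (if j ⋖ x ∧ i = j then φ x / 2 else 0)
              = (if i = j then (if j ⋖ x then φ x / 2 else 0) else 0) := by
            intro j _
            by_cases hij : i = j <;> by_cases hjx : j ⋖ x <;> simp [hij, hjx]
          rw [sum_congr rfl e2, sum_ite_eq, if_pos hiA, if_pos hix]
      · rw [if_neg hix]
        exact sum_eq_zero fun j _ => if_neg (fun hc : i ⋖ x ∧ j ⋖ x ∧ i ≠ j => hix hc.1)
    rw [sum_congr rfl hinner]
    have e3 : ∀ i ∈ A, (if i ⋖ x then (k x : ℝ) * (φ x / 2) - φ x / 2 else 0)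
        = (if i ⋖ x then ((k x : ℝ) * (φ x / 2) - φ x / 2) else 0) := fun _ _ => rfl
    rw [← sum_filter, sum_const, nsmul_eq_mul]
    show (k x : ℝ) * ((k x : ℝ) * (φ x / 2) - φ x / 2) = _
    ring
  rw [hE]
  -- LHS as a sum over univ
  have hL : (∑ x ∈ A.filter (fun x => ∀ y ∈ A, y ≤ x → y = x), φ x)
      = ∑ x ∈ univ, (if x ∈ A ∧ (∀ y ∈ A, y ≤ x → y = x) then φ x else 0) := by
    rw [← sum_filter]
    congr 1
    ext x
    simp only [mem_filter, mem_univ, true_and]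
  rw [hL, ← sum_sub_distrib, ← sum_add_distrib]
  refine sum_congr rfl fun x _ => ?_
  by_cases hxA : x ∈ A
  · have hP := hmink x hxA
    have hkx : k x = 0 ∨ k x = 1 ∨ k x = 2 := by have := hk2 x; omega
    rcases hkx with h | h | h
    · rw [if_pos ⟨hxA, hP.mpr h⟩, if_pos hxA, h]
      push_cast; ring
    · have hnP : ¬(x ∈ A ∧ ∀ y ∈ A, y ≤ x → y = x) := by
        rintro ⟨_, hp⟩; rw [hP] at hp; omega
      rw [if_neg hnP, if_pos hxA, h]
      push_cast; ring
    · have hnP : ¬(x ∈ A ∧ ∀ y ∈ A, y ≤ x → y = x) := by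
        rintro ⟨_, hp⟩; rw [hP] at hp; omega
      rw [if_neg hnP, if_pos hxA, h]
      push_cast; ring
  · have hk0 : k x = 0 := by
      by_contra h
      exact hxA (hmemk x (Nat.one_le_iff_ne_zero.mpr h))
    rw [if_neg (fun hc => hxA hc.1), if_neg hxA, hk0]
    push_cast; ring
end

section
/- Let (X,⪯) be a finite poset with upset lattice U, weights φ_x ≥ 0, and σ(A)=∑_{x∈Min(A)}φ_x. Suppose σ is increasing and satisfies the inclusion-exclusion inequality on U, with weights W_U from Möbius inversion, so σ(A)=∑_{B∈U, B⊆A}W_B with W_B≥0. If U_0 ∈ U has three or more distinct minimal elements, and each element of X covers at most two elements, then W_{U_0} = 0. -/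
open Finset
open scoped Classical


lemma aux_sum_neg_one_pow {α : Type*} [DecidableEq α] (T : Finset α) :
    ∑ S ∈ T.powerset, (-1 : ℝ) ^ S.card = if T = ∅ then 1 else 0 := by
  have h := Finset.sum_powerset_neg_one_pow_card (x := T)
  have h2 : ((∑ m ∈ T.powerset, (-1 : ℤ) ^ m.card : ℤ) : ℝ)
      = ((if T = ∅ then 1 else 0 : ℤ) : ℝ) := by rw [h]
  push_cast at h2
  simpa using h2

lemma aux_sum_interval {α : Type*} [DecidableEq α] (D Y : Finset α) (hD : D ⊆ Y) :
    ∑ S ∈ Y.powerset.filter (fun S => D ⊆ S), (-1 : ℝ) ^ S.card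
      = (-1) ^ D.card * (if Y \ D = ∅ then 1 else 0) := by
  have key : ∑ S ∈ Y.powerset.filter (fun S => D ⊆ S), (-1 : ℝ) ^ S.card
      = ∑ S' ∈ (Y \ D).powerset, (-1 : ℝ) ^ (S' ∪ D).card := by
    refine Finset.sum_bij' (fun S _ => S \ D) (fun S' _ => S' ∪ D) ?_ ?_ ?_ ?_ ?_
    · intro S hS
      simp only [mem_filter, mem_powerset] at hS
      exact mem_powerset.2 (sdiff_subset_sdiff hS.1 (Finset.Subset.refl _))
    · intro S' hS'
      simp only [mem_powerset] at hS'
      refine mem_filter.2 ⟨mem_powerset.2 (union_subset (hS'.trans sdiff_subset) hD),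
        subset_union_right⟩
    · intro S hS
      simp only [mem_filter, mem_powerset] at hS
      exact (sdiff_union_of_subset hS.2)
    · intro S' hS'
      simp only [mem_powerset] at hS'
      have hdisj : Disjoint S' D := (sdiff_disjoint (s := D) (t := Y)).mono_left hS'
      rw [union_sdiff_right]
      exact sdiff_eq_self_of_disjoint hdisj
    · intro S hS
      simp only [mem_filter, mem_powerset] at hS
      rw [sdiff_union_of_subset hS.2]
  rw [key]
  have : ∀ S' ∈ (Y \ D).powerset, (-1 : ℝ) ^ (S' ∪ D).card
      = (-1) ^ D.card * (-1 : ℝ) ^ S'.card := by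
    intro S' hS'
    have hdisj : Disjoint S' D := (sdiff_disjoint (s := D) (t := Y)).mono_left
      (mem_powerset.1 hS')
    rw [card_union_of_disjoint hdisj, pow_add, mul_comm]
  rw [Finset.sum_congr rfl this, ← mul_sum, aux_sum_neg_one_pow]


theorem weight_zero_of_three_minimals {X : Type*} [Fintype X] [PartialOrder X]
    (hcov : ∀ x : X, ({y : X | y ⋖ x}).ncard ≤ 2)
    (φ : X → ℝ) (hφ0 : ∀ x, 0 ≤ φ x)
    (σ : Finset X → ℝ)
    (hσ : ∀ A : Finset X,
      σ A = ∑ x ∈ A.filter (fun x => ∀ y ∈ A, y ≤ x → y = x), φ x)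
    (hmono : ∀ A B : Finset X, IsUpperSet (A : Set X) → IsUpperSet (B : Set X) →
      A ⊆ B → σ A ≤ σ B)
    (W : Finset X → ℝ)
    (hW0 : ∀ B : Finset X, IsUpperSet (B : Set X) → 0 ≤ W B)
    (hWsum : ∀ A : Finset X, IsUpperSet (A : Set X) →
      σ A = ∑ B ∈ Finset.univ.powerset.filter
          (fun B : Finset X => IsUpperSet (B : Set X) ∧ B ⊆ A), W B)
    (U₀ : Finset X) (hU₀ : IsUpperSet (U₀ : Set X))
    (x y z : X) (hxy : x ≠ y) (hyz : y ≠ z) (hxz : x ≠ z)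
    (hx : Minimal (· ∈ (U₀ : Set X)) x)
    (hy : Minimal (· ∈ (U₀ : Set X)) y)
    (hz : Minimal (· ∈ (U₀ : Set X)) z) :
    W U₀ = 0 := by
  classical
  set Y : Finset X := {x, y, z} with hYdef
  have hmin : ∀ a ∈ Y, Minimal (· ∈ (U₀ : Set X)) a := by
    intro a ha
    simp only [hYdef, mem_insert, mem_singleton] at ha
    rcases ha with rfl | rfl | rfl
    exacts [hx, hy, hz]
  have hYU : Y ⊆ U₀ := fun a ha => mem_coe.1 (hmin a ha).prop
  have hYcard : Y.card = 3 := by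
    rw [hYdef, card_insert_of_notMem (by simp [hxy, hxz]),
      card_insert_of_notMem (by simp [hyz]), card_singleton]
  have hupset : ∀ S : Finset X, S ⊆ Y → IsUpperSet ((U₀ \ S : Finset X) : Set X) := by
    intro S hS a b hab ha
    simp only [coe_sdiff, Set.mem_diff, mem_coe] at ha ⊢
    have hbU : b ∈ U₀ := mem_coe.1 (hU₀ hab (mem_coe.2 ha.1))
    refine ⟨hbU, fun hbS => ?_⟩
    have hbY : b ∈ Y := hS hbS
    have heq : a = b := (hmin b hbY).eq_of_le (mem_coe.2 ha.1) hab
    exact ha.2 (heq ▸ hbS)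
  have hkey : ∀ w : X, U₀.filter (fun u => u < w) ⊆ Y →
      ¬ (Y ⊆ U₀.filter (fun u => u < w)) := by
    intro w hDY hYD
    have hcovs : (Y : Set X) ⊆ {u | u ⋖ w} := by
      intro a ha
      rw [mem_coe] at ha
      have haD := hYD ha
      rw [mem_filter] at haD
      refine ⟨haD.2, fun c hac hcw => ?_⟩
      have hcU : c ∈ U₀ := mem_coe.1 (hU₀ hac.le (mem_coe.2 haD.1))
      have hcY : c ∈ Y := hDY (mem_filter.2 ⟨hcU, hcw⟩)
      exact absurd ((hmin c hcY).eq_of_le (mem_coe.2 haD.1) hac.le) hac.ne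
    have h3 : (3 : ℕ) ≤ ({u : X | u ⋖ w}).ncard := by
      have := Set.ncard_le_ncard hcovs (Set.toFinite _)
      rwa [Set.ncard_coe_finset, hYcard] at this
    have := hcov w
    omega
  set T : ℝ := ∑ S ∈ Y.powerset, (-1 : ℝ) ^ S.card * σ (U₀ \ S) with hTdef
  -- Evaluation 1 : via the weights W
  have hT1 : T = ∑ B ∈ Finset.univ.powerset.filter
      (fun B : Finset X => IsUpperSet (B : Set X) ∧ B ⊆ U₀ ∧ Y ⊆ B), W B := by
    have step1 : T = ∑ S ∈ Y.powerset, ∑ B ∈ Finset.univ.powerset,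
        (if IsUpperSet (B : Set X) ∧ B ⊆ U₀ \ S then (-1 : ℝ) ^ S.card * W B else 0) := by
      refine Finset.sum_congr rfl fun S hS => ?_
      rw [hWsum _ (hupset S (mem_powerset.1 hS)), Finset.mul_sum, Finset.sum_filter]
    have step3 : ∀ B ∈ Finset.univ.powerset,
        (∑ S ∈ Y.powerset, if IsUpperSet (B : Set X) ∧ B ⊆ U₀ \ S
            then (-1 : ℝ) ^ S.card * W B else 0)
        = (if IsUpperSet (B : Set X) ∧ B ⊆ U₀ ∧ Y ⊆ B then W B else 0) := by
      intro B _
      by_cases hup : IsUpperSet (B : Set X)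
      case neg => simp [hup]
      by_cases hBU : B ⊆ U₀
      case neg =>
        rw [if_neg (by tauto)]
        refine Finset.sum_eq_zero fun S hS => if_neg ?_
        rintro ⟨-, hsub⟩
        exact hBU (hsub.trans sdiff_subset)
      have hcond : ∀ S ∈ Y.powerset,
          ((IsUpperSet (B : Set X) ∧ B ⊆ U₀ \ S) ↔ S ∈ (Y \ B).powerset) := by
        intro S hS
        rw [mem_powerset] at hS
        rw [mem_powerset]
        constructor
        · rintro ⟨-, h⟩
          exact subset_sdiff.2 ⟨hS, (subset_sdiff.1 h).2.symm⟩
        · intro h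
          exact ⟨hup, subset_sdiff.2 ⟨hBU, (subset_sdiff.1 h).2.symm⟩⟩
      rw [Finset.sum_congr rfl (fun S hS => if_congr (hcond S hS) rfl rfl),
        Finset.sum_ite_mem, Finset.inter_eq_right.2 (Finset.powerset_mono.2 sdiff_subset),
        ← Finset.sum_mul, aux_sum_neg_one_pow]
      by_cases hYB : Y ⊆ B
      · rw [if_pos (sdiff_eq_empty_iff_subset.2 hYB), one_mul, if_pos ⟨hup, hBU, hYB⟩]
      · rw [if_neg (fun h => hYB (sdiff_eq_empty_iff_subset.1 h)), zero_mul,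
          if_neg (by tauto)]
    rw [step1, Finset.sum_comm, Finset.sum_congr rfl step3]
    exact (Finset.sum_filter _ _).symm
  -- Evaluation 2 : via σ and minimal elements
  have hT2 : T = 0 := by
    have hfs : ∀ S : Finset X,
        (U₀ \ S).filter (fun w => ∀ u ∈ U₀ \ S, u ≤ w → u = w)
        = Finset.univ.filter
            (fun w => w ∈ U₀ ∧ w ∉ S ∧ U₀.filter (fun u => u < w) ⊆ S) := by
      intro S
      ext w
      simp only [mem_filter, mem_sdiff, mem_univ, true_and]
      constructor
      · rintro ⟨⟨hwU, hwS⟩, hmin'⟩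
        refine ⟨hwU, hwS, fun u hu => ?_⟩
        rw [mem_filter] at hu
        by_contra huS
        exact absurd (hmin' u ⟨hu.1, huS⟩ hu.2.le) hu.2.ne
      · rintro ⟨hwU, hwS, hD⟩
        refine ⟨⟨hwU, hwS⟩, fun u hu hle => ?_⟩
        by_contra hne
        exact hu.2 (hD (mem_filter.2 ⟨hu.1, lt_of_le_of_ne hle hne⟩))
    have step1 : T = ∑ S ∈ Y.powerset, ∑ w ∈ Finset.univ,
        (if w ∈ U₀ ∧ w ∉ S ∧ U₀.filter (fun u => u < w) ⊆ S
          then (-1 : ℝ) ^ S.card * φ w else 0) := by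
      refine Finset.sum_congr rfl fun S hS => ?_
      rw [hσ, hfs S, Finset.mul_sum, Finset.sum_filter]
    rw [step1, Finset.sum_comm]
    refine Finset.sum_eq_zero fun w _ => ?_
    have factor : ∀ S ∈ Y.powerset,
        (if w ∈ U₀ ∧ w ∉ S ∧ U₀.filter (fun u => u < w) ⊆ S
          then (-1 : ℝ) ^ S.card * φ w else 0)
        = (if w ∈ U₀ ∧ w ∉ S ∧ U₀.filter (fun u => u < w) ⊆ S
          then (-1 : ℝ) ^ S.card else 0) * φ w := by
      intro S _
      split <;> simp
    rw [Finset.sum_congr rfl factor, ← Finset.sum_mul]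
    suffices h : (∑ S ∈ Y.powerset,
        if w ∈ U₀ ∧ w ∉ S ∧ U₀.filter (fun u => u < w) ⊆ S
          then (-1 : ℝ) ^ S.card else 0) = 0 by
      rw [h, zero_mul]
    by_cases hwU : w ∈ U₀
    case neg => exact Finset.sum_eq_zero fun S _ => if_neg (by tauto)
    set D := U₀.filter (fun u => u < w) with hDdef
    by_cases hwY : w ∈ Y
    · -- w is one of the three minimal elements
      have hDempty : D = ∅ := by
        rw [hDdef, Finset.filter_eq_empty_iff]
        intro u huU hlt
        exact hlt.ne ((hmin w hwY).eq_of_le (mem_coe.2 huU) hlt.le)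
      have hiff : ∀ S ∈ Y.powerset,
          ((w ∈ U₀ ∧ w ∉ S ∧ D ⊆ S) ↔ S ∈ (Y.erase w).powerset) := by
        intro S hS
        rw [mem_powerset] at hS
        rw [mem_powerset, Finset.subset_erase]
        constructor
        · rintro ⟨-, hwS, -⟩; exact ⟨hS, hwS⟩
        · rintro ⟨-, hwS⟩
          exact ⟨hwU, hwS, by rw [hDempty]; exact empty_subset S⟩
      rw [Finset.sum_congr rfl (fun S hS => if_congr (hiff S hS) rfl rfl),
        Finset.sum_ite_mem,
        Finset.inter_eq_right.2 (Finset.powerset_mono.2 (erase_subset _ _)),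
        aux_sum_neg_one_pow, if_neg]
      intro h
      have hc := Finset.card_erase_of_mem hwY
      rw [h, hYcard] at hc
      simp at hc
    · -- w is not one of x, y, z
      by_cases hDY : D ⊆ Y
      · have hYD : ¬ Y ⊆ D := hkey w hDY
        have hiff : ∀ S ∈ Y.powerset, ((w ∈ U₀ ∧ w ∉ S ∧ D ⊆ S) ↔ D ⊆ S) := by
          intro S hS
          constructor
          · rintro ⟨-, -, h⟩; exact h
          · intro h; exact ⟨hwU, fun hwS => hwY (mem_powerset.1 hS hwS), h⟩
        have hne : ¬ (Y \ D = ∅) := fun h => hYD (sdiff_eq_empty_iff_subset.1 h)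
        rw [Finset.sum_congr rfl (fun S hS => if_congr (hiff S hS) rfl rfl),
          ← Finset.sum_filter, aux_sum_interval D Y hDY, if_neg hne, mul_zero]
      · refine Finset.sum_eq_zero fun S hS => if_neg ?_
        rintro ⟨-, -, hDS⟩
        exact hDY (hDS.trans (mem_powerset.1 hS))
  -- Combine
  have hU₀mem : U₀ ∈ Finset.univ.powerset.filter
      (fun B : Finset X => IsUpperSet (B : Set X) ∧ B ⊆ U₀ ∧ Y ⊆ B) :=
    Finset.mem_filter.2 ⟨Finset.mem_powerset.2 (Finset.subset_univ _),
      hU₀, Finset.Subset.refl _, hYU⟩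
  have hle : W U₀ ≤ T := by
    rw [hT1]
    exact Finset.single_le_sum (fun B hB => hW0 B (Finset.mem_filter.1 hB).2.1) hU₀mem
  have hge : 0 ≤ W U₀ := hW0 U₀ hU₀
  rw [hT2] at hle
  linarith
end

section
/- Let P be a nonnegative random variable that is superuniform, i.e. ℙ(P ≤ c) ≤ c for all c∈[0,1]. Let g:[0,1]→ℝ≥0 be a nonincreasing function. Then E[g(P)·1_{P≤t}] ≤ ∫_0^t g(p) dp for every t∈[0,1]. -/
open MeasureTheory
open scoped ProbabilityTheory

theorem superuniform_expectation_bound {Ω : Type*} [MeasureSpace Ω]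
    [IsProbabilityMeasure (ℙ : Measure Ω)]
    (P : Ω → ℝ) (hPmeas : Measurable P)
    (hP01 : ∀ ω, P ω ∈ Set.Icc (0 : ℝ) 1)
    (hsup : ∀ c ∈ Set.Icc (0 : ℝ) 1, ((ℙ : Measure Ω) {ω | P ω ≤ c}).toReal ≤ c)
    (g : ℝ → ℝ) (hg0 : ∀ p ∈ Set.Icc (0 : ℝ) 1, 0 ≤ g p)
    (hganti : AntitoneOn g (Set.Icc (0 : ℝ) 1))
    (t : ℝ) (ht : t ∈ Set.Icc (0 : ℝ) 1) :
    ∫⁻ ω in {ω | P ω ≤ t}, ENNReal.ofReal (g (P ω)) ∂(ℙ : Measure Ω)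
      ≤ ∫⁻ p in Set.Ioc (0 : ℝ) t, ENNReal.ofReal (g p) := by
  obtain ⟨ht0, ht1⟩ := ht
  -- clamp
  set G : ℝ → ℝ := fun p => g (min 1 (max 0 p)) with hGdef
  have hclamp : ∀ p : ℝ, min 1 (max 0 p) ∈ Set.Icc (0 : ℝ) 1 := by
    intro p
    constructor
    · exact le_min zero_le_one (le_max_left 0 p)
    · exact min_le_left _ _
  have hGanti : Antitone G := by
    intro a b hab
    exact hganti (hclamp a) (hclamp b)
      (min_le_min le_rfl (max_le_max le_rfl hab))
  have hGmeas : Measurable G := hGanti.measurable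
  have hGnn : ∀ p, 0 ≤ G p := fun p => hg0 _ (hclamp p)
  have hGeq : ∀ p ∈ Set.Icc (0 : ℝ) 1, G p = g p := by
    intro p hp
    simp only [hGdef]
    rw [max_eq_right hp.1, min_eq_right hp.2]
  -- rewrite LHS
  have hL : (∫⁻ ω in {ω | P ω ≤ t}, ENNReal.ofReal (g (P ω)) ∂(ℙ : Measure Ω))
      = ∫⁻ ω in {ω | P ω ≤ t}, ENNReal.ofReal (G (P ω)) ∂(ℙ : Measure Ω) := by
    apply lintegral_congr
    intro ω
    rw [hGeq _ (hP01 ω)]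
  have hR : (∫⁻ p in Set.Ioc (0 : ℝ) t, ENNReal.ofReal (g p))
      = ∫⁻ p in Set.Ioc (0 : ℝ) t, ENNReal.ofReal (G p) := by
    apply setLIntegral_congr_fun measurableSet_Ioc
    intro p hp
    show ENNReal.ofReal (g p) = ENNReal.ofReal (G p)
    rw [hGeq _ ⟨hp.1.le, hp.2.trans ht1⟩]
  rw [hL, hR]
  -- layercake both sides
  have hsetP : MeasurableSet {ω | P ω ≤ t} := hPmeas measurableSet_Iic
  rw [lintegral_eq_lintegral_meas_lt _ (Filter.Eventually.of_forall fun ω => hGnn (P ω))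
      ((hGmeas.comp hPmeas).aemeasurable),
    lintegral_eq_lintegral_meas_lt _ (Filter.Eventually.of_forall fun p => hGnn p)
      hGmeas.aemeasurable]
  apply lintegral_mono
  intro s
  dsimp only
  rw [Measure.restrict_apply (show MeasurableSet {a | s < G (P a)} from measurableSet_lt measurable_const (hGmeas.comp hPmeas)),
    Measure.restrict_apply (measurableSet_lt measurable_const hGmeas)]
  -- key pointwise bound
  set E : Set ℝ := {p | s < G p} ∩ Set.Iic t with hEdef
  by_cases hE : E.Nonempty
  · have hEbdd : BddAbove E := ⟨t, fun p hp => hp.2⟩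
    set c : ℝ := sSup E with hc
    have hct : c ≤ t := csSup_le hE fun p hp => hp.2
    have hc1 : c ≤ 1 := hct.trans ht1
    -- ℙ side ≤ ofReal (max c 0)
    have h1 : (ℙ : Measure Ω) ({ω | s < G (P ω)} ∩ {ω | P ω ≤ t})
        ≤ ENNReal.ofReal (max c 0) := by
      have hsub : {ω | s < G (P ω)} ∩ {ω | P ω ≤ t} ⊆ {ω | P ω ≤ max c 0} := by
        intro ω hω
        have : P ω ∈ E := ⟨hω.1, hω.2⟩
        exact le_max_of_le_left (le_csSup hEbdd this)
      have hmc : max c 0 ∈ Set.Icc (0 : ℝ) 1 :=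
        ⟨le_max_right _ _, max_le hc1 zero_le_one⟩
      have := hsup _ hmc
      calc (ℙ : Measure Ω) ({ω | s < G (P ω)} ∩ {ω | P ω ≤ t})
          ≤ (ℙ : Measure Ω) {ω | P ω ≤ max c 0} := measure_mono hsub
        _ ≤ ENNReal.ofReal (max c 0) := by
            rw [ENNReal.le_ofReal_iff_toReal_le (measure_ne_top _ _) hmc.1]
            exact this
    -- volume side ≥ ofReal (max c 0)
    have h2 : ENNReal.ofReal (max c 0) ≤ volume ({p | s < G p} ∩ Set.Ioc 0 t) := by
      have hsub : Set.Ioo (0 : ℝ) c ⊆ {p | s < G p} ∩ Set.Ioc 0 t := by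
        intro p hp
        obtain ⟨q, hqE, hpq⟩ := exists_lt_of_lt_csSup hE hp.2
        refine ⟨lt_of_lt_of_le hqE.1 (hGanti hpq.le), hp.1, (hpq.le.trans hqE.2)⟩
      calc ENNReal.ofReal (max c 0) = ENNReal.ofReal c := by
            rcases le_total c 0 with h | h
            · rw [max_eq_right h, ENNReal.ofReal_zero, ENNReal.ofReal_eq_zero.mpr h]
            · rw [max_eq_left h]
        _ = volume (Set.Ioo (0 : ℝ) c) := by rw [Real.volume_Ioo, sub_zero]
        _ ≤ volume ({p | s < G p} ∩ Set.Ioc 0 t) := measure_mono hsub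
    exact h1.trans h2
  · have : {ω | s < G (P ω)} ∩ {ω | P ω ≤ t} = ∅ := by
      ext ω
      simp only [Set.mem_inter_iff, Set.mem_setOf_eq, Set.mem_empty_iff_false, iff_false]
      rintro ⟨h1, h2⟩
      exact hE ⟨P ω, h1, h2⟩
    rw [this, measure_empty]
    exact zero_le
end

section
/- Let R be a collection of subsets of {1,...,m} closed under unions and intersections, let I_A ∈ R, I_N its complement, and for any S ⊆ {1,...,m} let S̄ denote the smallest element of R containing S. Then for any S ⊆ {1,...,m}, S̄ ∩ I_N ⊆ (S ∩ I_N)̄, i.e. the closure of S intersected with I_N is contained in the closure of S∩I_N. -/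
open Finset

section

variable {α : Type*}

theorem Finset.isLeast_inf_filter_le [Lattice α] [OrderTop α] {R : Finset α}
    (hR : InfClosed (R : Set α)) (htop : ⊤ ∈ R) (a : α) [DecidablePred (a ≤ ·)] :
    IsLeast {b | b ∈ R ∧ a ≤ b} ((R.filter (a ≤ ·)).inf id) := by
  refine ⟨⟨hR.finsetInf_mem ⟨⊤, mem_filter.2 ⟨htop, le_top⟩⟩ fun b hb => (mem_filter.1 hb).1,
    Finset.le_inf fun b hb => (mem_filter.1 hb).2⟩, fun b hb => inf_le (mem_filter.2 hb)⟩

theorem sdiff_le_closure_sdiff [GeneralizedCoheytingAlgebra α] {R : Set α} (hR : SupClosed R)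
    {cl : α → α} (hcl : ∀ a, IsLeast {b | b ∈ R ∧ a ≤ b} (cl a)) {i : α} (hi : i ∈ R) (a : α) :
    cl a \ i ≤ cl (a \ i) := by
  have hsup_mem : i ⊔ cl (a \ i) ∈ R := hR hi (hcl (a \ i)).1.1
  have hle_sup : a ≤ i ⊔ cl (a \ i) := le_sup_sdiff.trans (sup_le_sup_left (hcl (a \ i)).1.2 i)
  exact sdiff_le_iff.2 ((hcl a).2 ⟨hsup_mem, hle_sup⟩)

end

theorem closure_inter_nulls_subset {m : ℕ} (R : Finset (Finset (Fin m)))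
    (hunion : ∀ A ∈ R, ∀ B ∈ R, A ∪ B ∈ R)
    (hinter : ∀ A ∈ R, ∀ B ∈ R, A ∩ B ∈ R)
    (huniv : Finset.univ ∈ R)
    (IA : Finset (Fin m)) (hIA : IA ∈ R)
    (cl : Finset (Fin m) → Finset (Fin m))
    (hcl : ∀ S : Finset (Fin m), cl S = (R.filter (fun T => S ⊆ T)).inf id)
    (S : Finset (Fin m)) :
    cl S ∩ (Finset.univ \ IA) ⊆ cl (S ∩ (Finset.univ \ IA)) := by
  have hleast (T : Finset (Fin m)) : IsLeast {U | U ∈ R ∧ T ≤ U} (cl T) := by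
    rw [hcl]
    exact isLeast_inf_filter_le (fun A hA B hB => hinter A hA B hB) huniv T
  rw [← compl_eq_univ_sdiff, ← sdiff_eq_inter_compl, ← sdiff_eq_inter_compl]
  exact sdiff_le_closure_sdiff (fun A hA B hB => hunion A hA B hB) hleast hIA S
end

section
/- Let φ: R → ℝ≥0 on a union/intersection-closed collection R satisfy the inclusion-exclusion inequality. Suppose for some A ∈ R and some decomposition A = closure(A_1∪⋯∪A_n) with A_i ∈ R, the inclusion-exclusion inequality holds with equality: φ(A) = ∑_{∅≠S⊆{1,...,n}} (-1)^{|S|+1} φ(∩_{i∈S}A_i). Then for any additional A_{n+1} ∈ R with A_{n+1} ⊆ A, equality also holds for the extended decomposition: φ(A) = ∑_{∅≠S⊆{1,...,n+1}} (-1)^{|S|+1} φ(∩_{i∈S}A_i). -/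
open Finset

private lemma sum_powerset_map' {α β : Type*} [DecidableEq α] [DecidableEq β]
    (f : α ↪ β) (s : Finset α) : ∀ g : Finset β → ℝ,
    ∑ K ∈ (s.map f).powerset, g K = ∑ K ∈ s.powerset, g (K.map f) := by
  induction s using Finset.cons_induction with
  | empty => intro g; simp
  | cons a s ha ih =>
    intro g
    rw [Finset.cons_eq_insert, Finset.map_insert,
      Finset.sum_powerset_insert (by simp [ha]),
      Finset.sum_powerset_insert ha, ih g, ih (fun K => g (insert (f a) K))]
    congr 1
    refine Finset.sum_congr rfl fun K _ => ?_
    rw [Finset.map_insert]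

theorem equality_extends_decomposition {m : ℕ} (R : Finset (Finset (Fin m)))
    (hunion : ∀ A ∈ R, ∀ B ∈ R, A ∪ B ∈ R)
    (hinter : ∀ A ∈ R, ∀ B ∈ R, A ∩ B ∈ R)
    (huniv : Finset.univ ∈ R)
    (cl : Finset (Fin m) → Finset (Fin m))
    (hcl : ∀ J : Finset (Fin m), cl J = (R.filter (fun T => J ⊆ T)).inf id)
    (φ : Finset (Fin m) → ℝ) (hφ0 : ∀ A ∈ R, 0 ≤ φ A)
    (hie : ∀ k : ℕ, 0 < k → ∀ B : Fin k → Finset (Fin m), (∀ i, B i ∈ R) →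
      ∑ K ∈ (Finset.univ : Finset (Fin k)).powerset.filter (fun K => K.Nonempty),
          (-1 : ℝ) ^ (K.card + 1) * φ (K.inf B)
        ≤ φ (cl (Finset.univ.sup B)))
    (n : ℕ) (hn : 0 < n)
    (A : Fin n → Finset (Fin m)) (hA : ∀ i, A i ∈ R)
    (A₀ : Finset (Fin m)) (hA₀ : A₀ = cl (Finset.univ.sup A))
    (heq : φ A₀ = ∑ K ∈ (Finset.univ : Finset (Fin n)).powerset.filter
          (fun K => K.Nonempty),
        (-1 : ℝ) ^ (K.card + 1) * φ (K.inf A))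
    (Aₙ : Finset (Fin m)) (hAₙ : Aₙ ∈ R) (hAsub : Aₙ ⊆ A₀) :
    φ A₀ = ∑ K ∈ (Finset.univ : Finset (Fin (n + 1))).powerset.filter
          (fun K => K.Nonempty),
        (-1 : ℝ) ^ (K.card + 1) * φ (K.inf (Fin.snoc A Aₙ)) := by
  haveI : Nonempty (Fin n) := Fin.pos_iff_nonempty.mp hn
  -- cl fixes elements of R
  have hclR : ∀ J ∈ R, cl J = J := by
    intro J hJ
    rw [hcl]
    apply le_antisymm
    · exact Finset.inf_le (by simp [hJ])
    · exact Finset.le_inf fun T hT => (Finset.mem_filter.mp hT).2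
  -- sup of the A's is in R
  have hsupA_mem : Finset.univ.sup A ∈ R := by
    have := Finset.sup'_mem (↑R : Set (Finset (Fin m)))
      (fun x hx y hy => hunion x hx y hy) Finset.univ Finset.univ_nonempty A
      (fun i _ => hA i)
    rwa [Finset.sup'_eq_sup] at this
  have hA0sup : A₀ = Finset.univ.sup A := by rw [hA₀, hclR _ hsupA_mem]
  have hA0R : A₀ ∈ R := hA0sup ▸ hsupA_mem
  -- the auxiliary sum S
  set S : ℝ := ∑ K ∈ (Finset.univ : Finset (Fin n)).powerset.filter
      (fun K => K.Nonempty), (-1 : ℝ) ^ (K.card + 1) * φ (Aₙ ∩ K.inf A) with hS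
  -- Step 1 : S ≤ φ Aₙ
  have step1 : S ≤ φ Aₙ := by
    have h := hie n hn (fun i => A i ∩ Aₙ) (fun i => hinter _ (hA i) _ hAₙ)
    have hsup : Finset.univ.sup (fun i => A i ∩ Aₙ) = Aₙ := by
      have : Finset.univ.sup A ⊓ Aₙ = Finset.univ.sup fun i => A i ⊓ Aₙ :=
        Finset.sup_inf_distrib_right _ _ _
      simp only [Finset.inf_eq_inter] at this
      rw [← this, ← hA0sup, Finset.inter_eq_right.mpr hAsub]
    rw [hsup, hclR _ hAₙ] at h
    refine le_trans (le_of_eq ?_) h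
    refine Finset.sum_congr rfl fun K hK => ?_
    obtain ⟨-, hKne⟩ := Finset.mem_filter.mp hK
    have : K.inf (fun i => A i ∩ Aₙ) = K.inf A ⊓ K.inf (fun _ => Aₙ) := by
      have := Finset.inf_inf (s := K) (f := A) (g := fun _ => Aₙ)
      exact this
    rw [this, Finset.inf_const hKne, Finset.inf_eq_inter, Finset.inter_comm]
  -- membership for the snoc family
  have hsnocR : ∀ i : Fin (n + 1), (Fin.snoc A Aₙ : Fin (n + 1) → Finset (Fin m)) i ∈ R := by
    intro i
    induction i using Fin.lastCases with
    | last => simpa using hAₙ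
    | cast j => simpa using hA j
  -- Step 2 : the extended sum is at most φ A₀
  have hsupsnoc : Finset.univ.sup (Fin.snoc A Aₙ) = A₀ := by
    rw [Fin.univ_castSuccEmb, Finset.sup_cons, Finset.sup_map]
    have h1 : (Fin.snoc A Aₙ : Fin (n + 1) → Finset (Fin m)) (Fin.last n) = Aₙ := by simp
    have h2 : (Fin.snoc A Aₙ ∘ Fin.castSuccEmb : Fin n → Finset (Fin m)) = A := by
      funext j
      simp [Fin.snoc_castSucc]
    rw [h1, h2, Finset.sup_eq_union, hA0sup, Finset.union_eq_right.mpr]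
    rw [← hA0sup]; exact hAsub
  have step2 := hie (n + 1) (Nat.succ_pos n) (Fin.snoc A Aₙ) hsnocR
  rw [hsupsnoc, hclR _ hA0R] at step2
  -- Step 3 : the extended sum equals φ A₀ + φ Aₙ - S
  have key : (∑ K ∈ (Finset.univ : Finset (Fin (n + 1))).powerset.filter
        (fun K => K.Nonempty),
      (-1 : ℝ) ^ (K.card + 1) * φ (K.inf (Fin.snoc A Aₙ)))
      = φ A₀ + (φ Aₙ - S) := by
    rw [Finset.sum_filter]
    rw [show (Finset.univ : Finset (Fin (n + 1)))
        = insert (Fin.last n) (Finset.univ.map Fin.castSuccEmb) by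
      rw [Fin.univ_castSuccEmb, Finset.cons_eq_insert]]
    have hlastnot : Fin.last n ∉ Finset.univ.map Fin.castSuccEmb := by
      intro hmem
      obtain ⟨x, -, hx⟩ := Finset.mem_map.mp hmem
      exact (Fin.castSucc_lt_last x).ne hx
    rw [Finset.sum_powerset_insert hlastnot]
    have hpart1 : (∑ K ∈ (Finset.univ.map Fin.castSuccEmb).powerset,
        if K.Nonempty then (-1 : ℝ) ^ (K.card + 1) * φ (K.inf (Fin.snoc A Aₙ))
        else 0) = φ A₀ := by
      rw [sum_powerset_map', heq, Finset.sum_filter]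
      refine Finset.sum_congr rfl fun K _ => ?_
      have hinf : (K.map Fin.castSuccEmb).inf (Fin.snoc A Aₙ) = K.inf A := by
        rw [Finset.inf_map]
        refine Finset.inf_congr rfl fun j _ => ?_
        simp only [Function.comp_apply]
        have : (Fin.castSuccEmb j : Fin (n + 1)) = Fin.castSucc j := rfl
        rw [this, Fin.snoc_castSucc]
      rw [hinf, Finset.card_map]
      simp
    have hpart2 : (∑ K ∈ (Finset.univ.map Fin.castSuccEmb).powerset,
        if (insert (Fin.last n) K).Nonempty then
          (-1 : ℝ) ^ ((insert (Fin.last n) K).card + 1) *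
            φ ((insert (Fin.last n) K).inf (Fin.snoc A Aₙ))
        else 0) = φ Aₙ - S := by
      rw [sum_powerset_map']
      have hterm : ∀ K ∈ (Finset.univ : Finset (Fin n)).powerset,
          (if (insert (Fin.last n) (K.map Fin.castSuccEmb)).Nonempty then
            (-1 : ℝ) ^ ((insert (Fin.last n) (K.map Fin.castSuccEmb)).card + 1) *
              φ ((insert (Fin.last n) (K.map Fin.castSuccEmb)).inf (Fin.snoc A Aₙ))
          else 0)
          = (-1 : ℝ) ^ (K.card + 2) * φ (Aₙ ∩ K.inf A) := by
        intro K _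
        have hnotmem : Fin.last n ∉ K.map Fin.castSuccEmb := by
          intro hmem
          obtain ⟨x, -, hx⟩ := Finset.mem_map.mp hmem
          exact (Fin.castSucc_lt_last x).ne hx
        have hcard : (insert (Fin.last n) (K.map Fin.castSuccEmb)).card
            = K.card + 1 := by
          rw [Finset.card_insert_of_notMem hnotmem, Finset.card_map]
        have hinf : (insert (Fin.last n) (K.map Fin.castSuccEmb)).inf
            (Fin.snoc A Aₙ) = Aₙ ∩ K.inf A := by
          rw [Finset.inf_insert, Finset.inf_map]
          have h2 : K.inf (Fin.snoc A Aₙ ∘ Fin.castSuccEmb) = K.inf A := by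
            refine Finset.inf_congr rfl fun j _ => ?_
            simp only [Function.comp_apply]
            have hj : (Fin.castSuccEmb j : Fin (n + 1)) = Fin.castSucc j := rfl
            rw [hj, Fin.snoc_castSucc]
          have h3 : (Fin.snoc A Aₙ : Fin (n + 1) → Finset (Fin m)) (Fin.last n)
              = Aₙ := by simp
          rw [h2, h3, Finset.inf_eq_inter]
        rw [if_pos (Finset.insert_nonempty _ _), hcard, hinf]
      rw [Finset.sum_congr rfl hterm]
      rw [← Finset.sum_filter_add_sum_filter_not
        ((Finset.univ : Finset (Fin n)).powerset) (fun K => K.Nonempty)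
        (fun K => (-1 : ℝ) ^ (K.card + 2) * φ (Aₙ ∩ K.inf A))]
      have hempty : (Finset.univ : Finset (Fin n)).powerset.filter
          (fun K => ¬ K.Nonempty) = {∅} := by
        ext K
        simp [Finset.not_nonempty_iff_eq_empty]
      rw [hempty, Finset.sum_singleton]
      have h0 : Aₙ ∩ (∅ : Finset (Fin n)).inf A = Aₙ := by simp
      have hne : ∀ K ∈ (Finset.univ : Finset (Fin n)).powerset.filter
          (fun K => K.Nonempty),
          (-1 : ℝ) ^ (K.card + 2) * φ (Aₙ ∩ K.inf A)
            = -((-1 : ℝ) ^ (K.card + 1) * φ (Aₙ ∩ K.inf A)) := by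
        intro K _
        rw [pow_succ]
        ring
      rw [Finset.sum_congr rfl hne, Finset.sum_neg_distrib, h0, ← hS,
        show ((∅ : Finset (Fin n)).card + 2) = 2 from by simp,
        show ((-1 : ℝ)) ^ 2 = 1 from by norm_num, one_mul]
      ring
    rw [hpart1, hpart2]
  rw [key] at step2 ⊢
  have : S = φ Aₙ := le_antisymm step1 (by linarith)
  rw [this]; ring
end

section
/- Let (X,⪯) be a finite poset, U its lattice of upsets, φ_x ≥ 0 weights, and σ(A) = ∑_{x∈Min(A)}φ_x assumed increasing with respect to inclusion. If U_0 ∈ U is an upset with a unique minimal element x_0, then the Möbius-inversion weight of σ at U_0 equals σ(U_0) − σ(U_0 ∖ {x_0}) ≥ 0. -/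
open Finset
open scoped Classical

/-!
Every element of `U₀` lies above `x₀`, so an upset properly contained in `U₀` avoids `x₀`:
`U₀ ∖ {x₀}` is the unique coatom of the interval of upsets below `U₀`. Below a top `a` with a
unique coatom `v`, the Möbius recursion gives `μ(a, a) = 1`, `μ(a, v) = -1` and `μ(a, b) = 0` for
all `b < v` (the contributions of `a` and `v` cancel), so the Möbius-inversion sum reduces to
`σ(U₀) - σ(U₀ ∖ {x₀})`, which is nonnegative since `σ` is increasing.
-/

/-- The recursion defining `b ↦ μ(a, b)` on the subposet `{b | P b}`, computed downwards from `a`. -/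
structure IsMobiusFrom {α : Type*} [PartialOrder α] [Fintype α] (P : α → Prop) (a : α)
    (m : α → ℝ) : Prop where
  apply_self : m a = 1
  apply_of_lt : ∀ b, P b → b < a → m b = -∑ c ∈ univ.filter (fun c => P c ∧ b < c ∧ c ≤ a), m c

namespace IsMobiusFrom

variable {α : Type*} [PartialOrder α] [Fintype α] {P : α → Prop} {a v : α} {m : α → ℝ}

theorem apply_coatom (hm : IsMobiusFrom P a m) (ha : P a) (hv : P v) (hva : v < a)
    (hcoatom : ∀ b, P b → b < a → b ≤ v) : m v = -1 := by
  have hsum : ∑ c ∈ univ.filter (fun c => P c ∧ v < c ∧ c ≤ a), m c = m a := by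
    refine sum_eq_single_of_mem a (by simpa using ⟨ha, hva⟩) fun c hc hca => ?_
    obtain ⟨hc, hvc, hca'⟩ := by simpa using hc
    exact absurd (hcoatom c hc (lt_of_le_of_ne hca' hca)) hvc.not_ge
  rw [hm.apply_of_lt v hv hva, hsum, hm.apply_self]

theorem apply_eq_zero_of_lt_coatom (hm : IsMobiusFrom P a m) (ha : P a) (hv : P v) (hva : v < a)
    (hcoatom : ∀ b, P b → b < a → b ≤ v) : ∀ b, P b → b < v → m b = 0 := by
  intro b
  induction b using WellFoundedGT.induction with
  | ind b ih =>
    intro hb hbv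
    -- Every term of the recursion other than `m a = 1` and `m v = -1` vanishes by induction.
    have hsum : ∑ c ∈ univ.filter (fun c => P c ∧ b < c ∧ c ≤ a), m c = m a + m v := by
      refine sum_eq_add_of_mem a v (by simpa using ⟨ha, hbv.trans hva⟩)
        (by simpa using ⟨hv, hbv, hva.le⟩) hva.ne' fun c hc ⟨hca, hcv⟩ => ?_
      obtain ⟨hc, hbc, hca'⟩ := by simpa using hc
      exact ih c hbc hc (lt_of_le_of_ne (hcoatom c hc (lt_of_le_of_ne hca' hca)) hcv)
    rw [hm.apply_of_lt b hb (hbv.trans hva), hsum, hm.apply_self, hm.apply_coatom ha hv hva hcoatom]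
    norm_num

theorem sum_mul_eq_sub (hm : IsMobiusFrom P a m) (ha : P a) (hv : P v) (hva : v < a)
    (hcoatom : ∀ b, P b → b < a → b ≤ v) (f : α → ℝ) :
    ∑ c ∈ univ.filter (fun c => P c ∧ c ≤ a), m c * f c = f a - f v := by
  have hsum : ∑ c ∈ univ.filter (fun c => P c ∧ c ≤ a), m c * f c = m a * f a + m v * f v := by
    refine sum_eq_add_of_mem a v (by simpa using ha) (by simpa using ⟨hv, hva.le⟩) hva.ne'
      fun c hc ⟨hca, hcv⟩ => ?_
    obtain ⟨hc, hca'⟩ := by simpa using hc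
    have hcv' := lt_of_le_of_ne (hcoatom c hc (lt_of_le_of_ne hca' hca)) hcv
    rw [hm.apply_eq_zero_of_lt_coatom ha hv hva hcoatom c hc hcv', zero_mul]
  rw [hsum, hm.apply_self, hm.apply_coatom ha hv hva hcoatom]
  ring

end IsMobiusFrom

theorem Finset.le_of_minimals_eq_singleton {X : Type*} [PartialOrder X] [WellFoundedLT X]
    {U : Finset X} {x₀ : X} (h : U.filter (fun x => ∀ y ∈ U, y ≤ x → y = x) = {x₀}) :
    ∀ y ∈ U, x₀ ≤ y := by
  intro y hy
  obtain ⟨b, hby, hbU, hbmin⟩ := exists_minimal_le_of_wellFoundedLT (· ∈ U) y hy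
  have hb : b ∈ U.filter (fun x => ∀ y ∈ U, y ≤ x → y = x) :=
    mem_filter.mpr ⟨hbU, fun z hz hzb => le_antisymm hzb (hbmin hz hzb)⟩
  rw [h, mem_singleton] at hb
  exact hb ▸ hby

theorem IsUpperSet.subset_erase_of_ssubset {X : Type*} [Preorder X] {B U : Finset X} {x : X}
    (hB : IsUpperSet (B : Set X)) (hBU : B ⊂ U) (hx : ∀ y ∈ U, x ≤ y) : B ⊆ U.erase x :=
  subset_erase.mpr ⟨hBU.subset, fun hxB => hBU.not_subset fun y hy => hB (hx y hy) hxB⟩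

theorem weight_of_unique_minimal_general {X : Type*} [Fintype X] [PartialOrder X]
    (σ : Finset X → ℝ)
    (hmono : ∀ A B : Finset X, IsUpperSet (A : Set X) → IsUpperSet (B : Set X) →
      A ⊆ B → σ A ≤ σ B)
    (μ : Finset X → Finset X → ℝ)
    (hμ1 : ∀ A : Finset X, IsUpperSet (A : Set X) → μ A A = 1)
    (hμ2 : ∀ A B : Finset X, IsUpperSet (A : Set X) → IsUpperSet (B : Set X) →
      B ⊂ A → μ A B = -∑ A' ∈ Finset.univ.powerset.filter
          (fun A' : Finset X => IsUpperSet (A' : Set X) ∧ B ⊂ A' ∧ A' ⊆ A), μ A A')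
    (U₀ : Finset X) (hU₀ : IsUpperSet (U₀ : Set X)) (x₀ : X)
    (hx₀ : U₀.filter (fun x => ∀ y ∈ U₀, y ≤ x → y = x) = {x₀}) :
    ∑ U' ∈ Finset.univ.powerset.filter
        (fun U' : Finset X => IsUpperSet (U' : Set X) ∧ U' ⊆ U₀),
      μ U₀ U' * σ U' = σ U₀ - σ (U₀.erase x₀) ∧
    0 ≤ σ U₀ - σ (U₀.erase x₀) := by
  obtain ⟨hx₀U, hx₀min⟩ := mem_filter.mp (hx₀ ▸ mem_singleton_self x₀)
  have hV : IsUpperSet (U₀.erase x₀ : Set X) := by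
    rw [coe_erase]
    exact hU₀.erase hx₀min
  -- `congr!` and `convert` only reconcile the classical `Decidable` instances of the filters.
  have hm : IsMobiusFrom (fun A : Finset X => IsUpperSet (A : Set X)) U₀ (μ U₀) :=
    ⟨hμ1 U₀ hU₀, fun B hB hBU => by rw [hμ2 U₀ B hU₀ hB hBU, powerset_univ]; congr!⟩
  have hcoatom (B : Finset X) (hB : IsUpperSet (B : Set X)) (hBU : B ⊂ U₀) : B ⊆ U₀.erase x₀ :=
    hB.subset_erase_of_ssubset hBU (le_of_minimals_eq_singleton (by convert hx₀))
  refine ⟨?_, sub_nonneg.mpr (hmono _ _ hV hU₀ (erase_subset x₀ U₀))⟩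
  rw [powerset_univ]
  convert hm.sum_mul_eq_sub hU₀ hV (erase_ssubset hx₀U) hcoatom σ

theorem weight_of_unique_minimal {X : Type*} [Fintype X] [PartialOrder X]
    (φ : X → ℝ) (hφ0 : ∀ x, 0 ≤ φ x)
    (σ : Finset X → ℝ)
    (hσ : ∀ A : Finset X,
      σ A = ∑ x ∈ A.filter (fun x => ∀ y ∈ A, y ≤ x → y = x), φ x)
    (hmono : ∀ A B : Finset X, IsUpperSet (A : Set X) → IsUpperSet (B : Set X) →
      A ⊆ B → σ A ≤ σ B)
    (μ : Finset X → Finset X → ℝ)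
    (hμ1 : ∀ A : Finset X, IsUpperSet (A : Set X) → μ A A = 1)
    (hμ2 : ∀ A B : Finset X, IsUpperSet (A : Set X) → IsUpperSet (B : Set X) →
      B ⊂ A → μ A B = -∑ A' ∈ Finset.univ.powerset.filter
          (fun A' : Finset X => IsUpperSet (A' : Set X) ∧ B ⊂ A' ∧ A' ⊆ A), μ A A')
    (U₀ : Finset X) (hU₀ : IsUpperSet (U₀ : Set X)) (x₀ : X)
    (hx₀ : U₀.filter (fun x => ∀ y ∈ U₀, y ≤ x → y = x) = {x₀}) :
    ∑ U' ∈ Finset.univ.powerset.filter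
        (fun U' : Finset X => IsUpperSet (U' : Set X) ∧ U' ⊆ U₀),
      μ U₀ U' * σ U' = σ U₀ - σ (U₀.erase x₀) ∧
    0 ≤ σ U₀ - σ (U₀.erase x₀) :=
  weight_of_unique_minimal_general σ hmono μ hμ1 hμ2 U₀ hU₀ x₀ hx₀
end

section
/- In a finite poset (X,⪯), let T_1,...,T_n be upsets and x an element contained in all of T_1,...,T_l and none of T_{l+1},...,T_n. Suppose x covers exactly one element y with y ∈ T_1∪⋯∪T_l, and let B = {k ≤ l : y ∉ T_k}. Then x is a minimal element of ∩_{k∈A}T_k (for A ⊆ {1,...,l}) if and only if A ∩ B ≠ ∅, and consequently ∑_{A⊆{1,...,l}, x minimal in ∩_{k∈A}T_k} (-1)^{|A|} = 0. -/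
/-!
An upper set containing `x` has `x` as a minimal element iff it contains no element covered
by `x`. For `⋂ k ∈ A, T k` the only candidate is `y`, so `x` is minimal there iff some `T k`
with `k ∈ A` misses `y`, i.e. iff `A` meets `B`. Some index `k < l` lies outside `B`, because
`y` lies in some `T k`; adding or removing it preserves `A ∩ B` and flips the sign of `(-1) ^ #A`,
so the alternating sum vanishes.
-/

open Finset
open scoped Classical

theorem IsUpperSet.minimal_mem_iff_forall_covBy_notMem {α : Type*} [PartialOrder α]
    [IsStronglyCoatomic α] {s : Set α} (hs : IsUpperSet s) {x : α} (hx : x ∈ s) :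
    Minimal (· ∈ s) x ↔ ∀ y, y ⋖ x → y ∉ s := by
  refine ⟨fun hmin y hyx hy => hyx.lt.not_ge (hmin.2 hy hyx.le), fun hcov => ⟨hx, ?_⟩⟩
  intro z hz hzx
  by_contra hxz
  obtain ⟨w, hzw, hwx⟩ := exists_le_covBy_of_lt (lt_of_le_not_ge hzx hxz)
  exact hcov w hwx (hs hzw hz)

theorem Finset.sum_powerset_ite_inter_nonempty_neg_one_pow {ι R : Type*} [DecidableEq ι]
    [Ring R] {L B : Finset ι} (hLB : ¬ L ⊆ B) :
    ∑ A ∈ L.powerset, (if (A ∩ B).Nonempty then (-1 : R) ^ #A else 0) = 0 := by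
  obtain ⟨k, hkL, hkB⟩ := not_subset.1 hLB
  rw [← insert_erase hkL, sum_powerset_insert (notMem_erase k L), ← sum_add_distrib]
  refine sum_eq_zero fun A hA => ?_
  have hkA : k ∉ A := fun h => notMem_erase k L (mem_powerset.1 hA h)
  rw [insert_inter_of_notMem hkB, card_insert_of_notMem hkA, pow_succ]
  split_ifs <;> simp

theorem minimal_mem_biInter_iff_exists_notMem {α ι : Type*} [PartialOrder α]
    [IsStronglyCoatomic α] {T : ι → Set α} (hT : ∀ k, IsUpperSet (T k)) {A : Finset ι}
    {x y : α} (hx : ∀ k ∈ A, x ∈ T k) (hy : y ⋖ x)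
    (huniq : ∀ z, z ⋖ x → (∃ k ∈ A, z ∈ T k) → z = y) :
    Minimal (· ∈ ⋂ k ∈ A, T k) x ↔ ∃ k ∈ A, y ∉ T k := by
  rw [(isUpperSet_iInter₂ fun k _ => hT k).minimal_mem_iff_forall_covBy_notMem
    (Set.mem_iInter₂.2 hx)]
  simp only [Set.mem_iInter, not_forall, exists_prop]
  refine ⟨fun h => h y hy, fun ⟨k, hkA, hyk⟩ z hzx => ⟨k, hkA, fun hzk => hyk ?_⟩⟩
  rwa [← huniq z hzx ⟨k, hkA, hzk⟩]

theorem minimal_iff_meets_B_general {X : Type*} [Fintype X] [PartialOrder X]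
    (n l : ℕ)
    (T : Fin n → Set X) (hT : ∀ k, IsUpperSet (T k))
    (x : X)
    (hxin : ∀ k : Fin n, (k : ℕ) < l → x ∈ T k)
    (y : X) (hy : y ⋖ x)
    (hyU : ∃ k : Fin n, (k : ℕ) < l ∧ y ∈ T k)
    (huniq : ∀ z : X, z ⋖ x → (∃ k : Fin n, (k : ℕ) < l ∧ z ∈ T k) → z = y)
    (B : Finset (Fin n))
    (hB : B = Finset.univ.filter (fun k : Fin n => (k : ℕ) < l ∧ y ∉ T k)) :
    (∀ A : Finset (Fin n), A ⊆ Finset.univ.filter (fun k : Fin n => (k : ℕ) < l) →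
      (Minimal (· ∈ ⋂ k ∈ A, T k) x ↔ (A ∩ B).Nonempty)) ∧
    ∑ A ∈ (Finset.univ.filter (fun k : Fin n => (k : ℕ) < l)).powerset,
      (if Minimal (· ∈ ⋂ k ∈ A, T k) x then (-1 : ℤ) ^ A.card else 0) = 0 := by
  have hBmem : ∀ k, k ∈ B ↔ (k : ℕ) < l ∧ y ∉ T k := fun k => by simp [hB]
  have hminimal : ∀ A : Finset (Fin n), A ⊆ univ.filter (fun k : Fin n => (k : ℕ) < l) →
      (Minimal (· ∈ ⋂ k ∈ A, T k) x ↔ (A ∩ B).Nonempty) := by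
    intro A hA
    have hAl : ∀ k ∈ A, (k : ℕ) < l := fun k hk => (mem_filter.1 (hA hk)).2
    rw [minimal_mem_biInter_iff_exists_notMem hT (fun k hk => hxin k (hAl k hk)) hy
      fun z hzx ⟨k, hkA, hzk⟩ => huniq z hzx ⟨k, hAl k hkA, hzk⟩]
    simp only [Finset.Nonempty, mem_inter, hBmem]
    exact ⟨fun ⟨k, hkA, hyk⟩ => ⟨k, hkA, hAl k hkA, hyk⟩, fun ⟨k, hkA, _, hyk⟩ => ⟨k, hkA, hyk⟩⟩
  refine ⟨hminimal, ?_⟩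
  calc _ = ∑ A ∈ (univ.filter (fun k : Fin n => (k : ℕ) < l)).powerset,
        (if (A ∩ B).Nonempty then (-1 : ℤ) ^ #A else 0) :=
        sum_congr rfl fun A hA => if_congr (hminimal A (mem_powerset.1 hA)) rfl rfl
    _ = 0 := sum_powerset_ite_inter_nonempty_neg_one_pow fun hsub => ?_
  obtain ⟨k, hkl, hyk⟩ := hyU
  exact ((hBmem k).1 (hsub (mem_filter.2 ⟨mem_univ k, hkl⟩))).2 hyk

theorem minimal_iff_meets_B {X : Type*} [Fintype X] [PartialOrder X]
    (n l : ℕ) (hl : l ≤ n)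
    (T : Fin n → Set X) (hT : ∀ k, IsUpperSet (T k))
    (x : X)
    (hxin : ∀ k : Fin n, (k : ℕ) < l → x ∈ T k)
    (hxout : ∀ k : Fin n, l ≤ (k : ℕ) → x ∉ T k)
    (y : X) (hy : y ⋖ x)
    (hyU : ∃ k : Fin n, (k : ℕ) < l ∧ y ∈ T k)
    (huniq : ∀ z : X, z ⋖ x → (∃ k : Fin n, (k : ℕ) < l ∧ z ∈ T k) → z = y)
    (B : Finset (Fin n))
    (hB : B = Finset.univ.filter (fun k : Fin n => (k : ℕ) < l ∧ y ∉ T k)) :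
    (∀ A : Finset (Fin n), A ⊆ Finset.univ.filter (fun k : Fin n => (k : ℕ) < l) →
      (Minimal (· ∈ ⋂ k ∈ A, T k) x ↔ (A ∩ B).Nonempty)) ∧
    ∑ A ∈ (Finset.univ.filter (fun k : Fin n => (k : ℕ) < l)).powerset,
      (if Minimal (· ∈ ⋂ k ∈ A, T k) x then (-1 : ℤ) ^ A.card else 0) = 0 :=
  minimal_iff_meets_B_general n l T hT x hxin y hy hyU huniq B hB
end
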